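/- arXiv:2007.07183 — 6 statements merged into one kernel-verified Lean document; each statement's English description precedes it below -/
import Mathlib

section
/- Let G = (V, F, E) be a finite self-contained bipartite graph, and let S1 and S2 be two distinct minimal self-contained subsets of F. Then S1 and S2 are disjoint, and their adjacency sets are disjoint: S1 ∩ S2 = ∅ and N(S1) ∩ N(S2) = ∅. -/
variable {F V : Type*} [Fintype F] [Fintype V] [DecidableEq F] [DecidableEq V]

/-- The adjacency set `N(S)` of a set `S ⊆ F`, restricted to the vertex set `V'`. -/
def subAdj (E : Finset (F × V)) (V' : Finset V) (S : Finset F) : Finset V :=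
  V'.filter fun v => ∃ f ∈ S, (f, v) ∈ E

/-- `S ⊆ F` is a self-contained set (in the bipartite graph with edges `E` whose
variable part is `V'`): `|S| = |N(S)|` and `|S'| ≤ |N(S')|` for every `S' ⊆ S`. -/
def SCSet (E : Finset (F × V)) (V' : Finset V) (S : Finset F) : Prop :=
  S.card = (subAdj E V' S).card ∧ ∀ S' ⊆ S, S'.card ≤ (subAdj E V' S').card

/-- The bipartite graph with equation part `F'`, variable part `V'` and edges `E`
is self-contained: `|F'| = |V'|` and `F'` is self-contained. -/
def SCGraph (E : Finset (F × V)) (F' : Finset F) (V' : Finset V) : Prop :=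
  F'.card = V'.card ∧ SCSet E V' F'

/-- `S` is a minimal self-contained subset of `F'` (variable part `V'`):
`S` is nonempty, self-contained, and no nonempty proper subset of `S` is self-contained. -/
def MinSCSet (E : Finset (F × V)) (F' : Finset F) (V' : Finset V) (S : Finset F) : Prop :=
  S ⊆ F' ∧ S.Nonempty ∧ SCSet E V' S ∧ ∀ S' ⊂ S, S'.Nonempty → ¬ SCSet E V' S'

lemma subAdj_mono (E : Finset (F × V)) (V' : Finset V) {S T : Finset F} (h : S ⊆ T) :
    subAdj E V' S ⊆ subAdj E V' T := by
  intro v hv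
  simp only [subAdj, Finset.mem_filter] at *
  obtain ⟨hv1, f, hf, hfv⟩ := hv
  exact ⟨hv1, f, h hf, hfv⟩

lemma subAdj_union (E : Finset (F × V)) (V' : Finset V) (S T : Finset F) :
    subAdj E V' (S ∪ T) = subAdj E V' S ∪ subAdj E V' T := by
  ext v
  simp only [subAdj, Finset.mem_filter, Finset.mem_union]
  constructor
  · rintro ⟨hv, f, hf | hf, hfv⟩
    · exact Or.inl ⟨hv, f, hf, hfv⟩
    · exact Or.inr ⟨hv, f, hf, hfv⟩
  · rintro (⟨hv, f, hf, hfv⟩ | ⟨hv, f, hf, hfv⟩)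
    · exact ⟨hv, f, Or.inl hf, hfv⟩
    · exact ⟨hv, f, Or.inr hf, hfv⟩

/-- in a finite self-contained bipartite graph, two distinct minimal
self-contained subsets of `F` are disjoint and have disjoint adjacency sets. -/
theorem minimal_selfContained_disjoint (E : Finset (F × V))
    (hG : SCGraph E Finset.univ Finset.univ) (S₁ S₂ : Finset F)
    (h₁ : MinSCSet E Finset.univ Finset.univ S₁)
    (h₂ : MinSCSet E Finset.univ Finset.univ S₂) (hne : S₁ ≠ S₂) :
    S₁ ∩ S₂ = ∅ ∧ subAdj E Finset.univ S₁ ∩ subAdj E Finset.univ S₂ = ∅ := by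
  obtain ⟨hS1, hS1ne, ⟨hc1, hh1⟩, hmin1⟩ := h₁
  obtain ⟨hS2, hS2ne, ⟨hc2, hh2⟩, hmin2⟩ := h₂
  have hall := hG.2.2
  set N1 := subAdj E Finset.univ S₁ with hN1
  set N2 := subAdj E Finset.univ S₂ with hN2
  have hU : subAdj E Finset.univ (S₁ ∪ S₂) = N1 ∪ N2 := subAdj_union E _ S₁ S₂
  have hIsub : subAdj E Finset.univ (S₁ ∩ S₂) ⊆ N1 ∩ N2 := by
    intro v hv
    exact Finset.mem_inter.2 ⟨subAdj_mono E _ Finset.inter_subset_left hv,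
      subAdj_mono E _ Finset.inter_subset_right hv⟩
  have hu : (S₁ ∪ S₂).card ≤ (N1 ∪ N2).card := hU ▸ hall _ (Finset.subset_univ _)
  have hi2 : (S₁ ∩ S₂).card ≤ (subAdj E Finset.univ (S₁ ∩ S₂)).card :=
    hh1 _ Finset.inter_subset_left
  have hi3 : (subAdj E Finset.univ (S₁ ∩ S₂)).card ≤ (N1 ∩ N2).card :=
    Finset.card_le_card hIsub
  have hsum : (N1 ∪ N2).card + (N1 ∩ N2).card = S₁.card + S₂.card := by
    rw [Finset.card_union_add_card_inter, ← hc1, ← hc2]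
  have hsum2 : (S₁ ∪ S₂).card + (S₁ ∩ S₂).card = S₁.card + S₂.card :=
    Finset.card_union_add_card_inter _ _
  have key : (N1 ∩ N2).card ≤ (S₁ ∩ S₂).card := by omega
  have hcardI : (S₁ ∩ S₂).card = (subAdj E Finset.univ (S₁ ∩ S₂)).card :=
    le_antisymm hi2 (le_trans hi3 key)
  have hSCI : SCSet E Finset.univ (S₁ ∩ S₂) :=
    ⟨hcardI, fun S' hS' => hh1 S' (hS'.trans Finset.inter_subset_left)⟩
  have hIempty : S₁ ∩ S₂ = ∅ := by
    by_contra hne'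
    have hnon : (S₁ ∩ S₂).Nonempty := Finset.nonempty_of_ne_empty hne'
    rcases eq_or_lt_of_le (Finset.inter_subset_left : S₁ ∩ S₂ ⊆ S₁) with heq | hss
    · have hsub : S₁ ⊆ S₂ := by
        rw [← heq]; exact Finset.inter_subset_right
      exact hmin2 S₁ (hsub.ssubset_of_ne hne) hS1ne ⟨hc1, hh1⟩
    · exact hmin1 _ hss hnon hSCI
  refine ⟨hIempty, ?_⟩
  have h0 : (N1 ∩ N2).card = 0 := by
    rw [hIempty] at key; simpa using key
  exact Finset.card_eq_zero.mp h0
end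

section
/- Let G = (V, F, E) be a finite self-contained bipartite graph and let S ⊆ F be a minimal self-contained set. Then the subgraph G' of G induced by F' = F \ S and V' = V \ N(S) is self-contained; that is, |F'| = |V'| and for every T ⊆ F' one has |T| ≤ |N(T) \ N(S)|. -/
variable {F V : Type*} [Fintype F] [Fintype V] [DecidableEq F] [DecidableEq V]

lemma subAdj_sdiff (E : Finset (F × V)) (A : Finset V) (T : Finset F) :
    subAdj E (Finset.univ \ A) T = subAdj E Finset.univ T \ A := by
  ext v; simp only [subAdj, Finset.mem_filter, Finset.mem_sdiff, Finset.mem_univ, true_and]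
  tauto

/-- in a finite self-contained bipartite graph, removing a minimal
self-contained set `S` together with its adjacency set yields a self-contained
induced subgraph; that is, `|F \ S| = |V \ N(S)|` and `|T| ≤ |N(T) \ N(S)|` for
every `T ⊆ F \ S`. -/
theorem induced_subgraph_selfContained (E : Finset (F × V))
    (hG : SCGraph E Finset.univ Finset.univ) (S : Finset F)
    (hS : MinSCSet E Finset.univ Finset.univ S) :
    SCGraph E (Finset.univ \ S) (Finset.univ \ subAdj E Finset.univ S) ∧
    (Finset.univ \ S).card = (Finset.univ \ subAdj E Finset.univ S).card ∧
    ∀ T ⊆ Finset.univ \ S,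
      T.card ≤ (subAdj E Finset.univ T \ subAdj E Finset.univ S).card := by
  obtain ⟨hcard, hFcard, hall⟩ := hG
  obtain ⟨-, -, ⟨hScard, -⟩, -⟩ := hS
  set N := subAdj E Finset.univ S with hN
  have key : ∀ T ⊆ Finset.univ \ S,
      T.card ≤ (subAdj E Finset.univ T \ N).card := by
    intro T hT
    have hdisj : Disjoint S T := by
      refine Finset.disjoint_left.2 fun a haS haT => ?_
      exact (Finset.mem_sdiff.1 (hT haT)).2 haS
    have h1 := hall (S ∪ T) (Finset.subset_univ _)
    rw [subAdj_union] at h1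
    have h2 : (S ∪ T).card = S.card + T.card := Finset.card_union_of_disjoint hdisj
    have h3 : (subAdj E Finset.univ T \ N).card + N.card
        = (subAdj E Finset.univ T ∪ N).card := Finset.card_sdiff_add_card _ _
    have h4 : (N ∪ subAdj E Finset.univ T) = (subAdj E Finset.univ T ∪ N) :=
      Finset.union_comm _ _
    rw [h4] at h1
    omega
  have hSle : S.card ≤ (Finset.univ : Finset F).card := Finset.card_le_univ S
  have hNle : N.card ≤ (Finset.univ : Finset V).card := Finset.card_le_univ N
  have hcompl : (Finset.univ \ S).card = (Finset.univ \ N).card := by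
    rw [Finset.card_sdiff_of_subset (Finset.subset_univ _), Finset.card_sdiff_of_subset (Finset.subset_univ _)]
    omega
  have hmain : ∀ T ⊆ Finset.univ \ S,
      T.card ≤ (subAdj E (Finset.univ \ N) T).card := by
    intro T hT; rw [subAdj_sdiff]; exact key T hT
  have heq : (Finset.univ \ S).card = (subAdj E (Finset.univ \ N) (Finset.univ \ S)).card := by
    refine le_antisymm (hmain _ (Finset.Subset.refl _)) ?_
    calc (subAdj E (Finset.univ \ N) (Finset.univ \ S)).card
        ≤ (Finset.univ \ N).card := Finset.card_le_card (Finset.filter_subset _ _)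
      _ = (Finset.univ \ S).card := hcompl.symm
  exact ⟨⟨hcompl, heq, hmain⟩, hcompl, key⟩
end

section
/- Let G = (V, F, E) be a finite self-contained bipartite graph. If (S^(1), …, S^(n)) and (T^(1), …, T^(m)) are two causal-ordering decompositions of G, then n = m and the two unordered families of sets coincide: {S^(1), …, S^(n)} = {T^(1), …, T^(m)}; consequently the families of clusters of the two decompositions coincide as well. -/
variable {F V : Type*} [Fintype F] [Fintype V] [DecidableEq F] [DecidableEq V]

/-- `S^(1) ∪ ⋯ ∪ S^(i-1)`, the union of the sets preceding index `i`. -/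
def codPrev {n : ℕ} (S : Fin n → Finset F) (i : Fin n) : Finset F :=
  (Finset.univ.filter fun j => j < i).biUnion S

/-- `(S 0, …, S (n-1))` is a causal-ordering decomposition of the bipartite graph
with edges `E` on the full vertex sets. -/
def IsCOD (E : Finset (F × V)) {n : ℕ} (S : Fin n → Finset F) : Prop :=
  Finset.univ.biUnion S = (Finset.univ : Finset F) ∧
  ∀ i : Fin n,
    MinSCSet E (Finset.univ \ codPrev S i)
      (Finset.univ \ subAdj E Finset.univ (codPrev S i)) (S i)

/-- The cluster of `S^(i)`: the pair consisting of `S^(i)` and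
`N(S^(i)) \ N(S^(1) ∪ ⋯ ∪ S^(i-1))`. -/
def codCluster (E : Finset (F × V)) {n : ℕ} (S : Fin n → Finset F) (i : Fin n) :
    Finset F × Finset V :=
  (S i, subAdj E Finset.univ (S i) \ subAdj E Finset.univ (codPrev S i))


set_option linter.unusedSectionVars false

namespace CODUnique

open Finset

variable (E : Finset (F × V))

/-- Adjacency on the full vertex set. -/
abbrev adj (S : Finset F) : Finset V := subAdj E Finset.univ S

variable {E}

lemma mem_adj {S : Finset F} {v : V} : v ∈ adj E S ↔ ∃ f ∈ S, (f, v) ∈ E := by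
  simp [adj, subAdj]

lemma adj_mono {A B : Finset F} (h : A ⊆ B) : adj E A ⊆ adj E B := by
  intro v hv
  rw [mem_adj] at hv ⊢
  obtain ⟨f, hf, hfv⟩ := hv
  exact ⟨f, h hf, hfv⟩

lemma adj_union (A B : Finset F) : adj E (A ∪ B) = adj E A ∪ adj E B := by
  ext v
  simp only [mem_adj, Finset.mem_union]
  constructor
  · rintro ⟨f, hf | hf, hfv⟩
    · exact Or.inl ⟨f, hf, hfv⟩
    · exact Or.inr ⟨f, hf, hfv⟩
  · rintro (⟨f, hf, hfv⟩ | ⟨f, hf, hfv⟩)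
    · exact ⟨f, Or.inl hf, hfv⟩
    · exact ⟨f, Or.inr hf, hfv⟩

lemma adj_empty : adj E (∅ : Finset F) = ∅ := by simp [adj, subAdj]

variable (E) in
/-- Self-contained subset of the full graph (Hall condition is automatic). -/
def SC (A : Finset F) : Prop := A.card = (adj E A).card

variable (E) in
instance : DecidablePred (SC E) := fun A => by unfold SC; infer_instance

lemma hall (hG : SCGraph E Finset.univ Finset.univ) (A : Finset F) :
    A.card ≤ (adj E A).card := hG.2.2 A (Finset.subset_univ A)

lemma SC_univ (hG : SCGraph E Finset.univ Finset.univ) : SC E (Finset.univ : Finset F) :=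
  hG.2.1

lemma SC_empty : SC E (∅ : Finset F) := by simp [SC, adj_empty]

lemma SC_union_inter (hG : SCGraph E Finset.univ Finset.univ) {A B : Finset F}
    (hA : SC E A) (hB : SC E B) : SC E (A ∪ B) ∧ SC E (A ∩ B) := by
  have h1 : adj E (A ∩ B) ⊆ adj E A ∩ adj E B :=
    Finset.subset_inter (adj_mono Finset.inter_subset_left) (adj_mono Finset.inter_subset_right)
  have h2 := Finset.card_union_add_card_inter A B
  have h3 := Finset.card_union_add_card_inter (adj E A) (adj E B)
  have h4 : (adj E (A ∪ B)).card = (adj E A ∪ adj E B).card := by rw [adj_union]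
  have h5 := hall hG (A ∪ B)
  have h6 := hall hG (A ∩ B)
  have h7 : (adj E (A ∩ B)).card ≤ (adj E A ∩ adj E B).card := Finset.card_le_card h1
  unfold SC at hA hB ⊢
  omega

lemma SC_sup (hG : SCGraph E Finset.univ Finset.univ) {ι : Type*} (s : Finset ι)
    (f : ι → Finset F) (h : ∀ i ∈ s, SC E (f i)) : SC E (s.sup f) :=
  Finset.sup_induction SC_empty (fun a ha b hb => (SC_union_inter hG ha hb).1) h

lemma SC_inf (hG : SCGraph E Finset.univ Finset.univ) {ι : Type*} (s : Finset ι)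
    (f : ι → Finset F) (h : ∀ i ∈ s, SC E (f i)) : SC E (s.inf f) :=
  Finset.inf_induction (by simpa [Finset.top_eq_univ] using SC_univ hG)
    (fun a ha b hb => by simpa [Finset.inf_eq_inter] using (SC_union_inter hG ha hb).2) h

variable (E)

/-- The collection of all self-contained sets. -/
def scs : Finset (Finset F) := Finset.univ.filter (SC E)

/-- The smallest self-contained set containing `x`. -/
def Ax (x : F) : Finset F := ((scs E).filter (fun A => x ∈ A)).inf id

/-- The largest self-contained set not containing `x`. -/
def Cx (x : F) : Finset F := ((scs E).filter (fun A => x ∉ A)).sup id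

/-- The block of `x`. -/
def Dx (x : F) : Finset F := Ax E x \ Cx E x

/-- The cluster of the block of `x`. -/
def Kx (x : F) : Finset F × Finset V := (Dx E x, adj E (Dx E x) \ adj E (Cx E x))

variable {E}

lemma SC_Ax (hG : SCGraph E Finset.univ Finset.univ) (x : F) : SC E (Ax E x) :=
  SC_inf hG _ _ (fun A hA => (Finset.mem_filter.mp (Finset.mem_filter.mp hA).1).2)

lemma SC_Cx (hG : SCGraph E Finset.univ Finset.univ) (x : F) : SC E (Cx E x) :=
  SC_sup hG _ _ (fun A hA => (Finset.mem_filter.mp (Finset.mem_filter.mp hA).1).2)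

lemma mem_Ax (x : F) : x ∈ Ax E x := by
  have : ({x} : Finset F) ≤ Ax E x :=
    Finset.le_inf fun A hA =>
      Finset.singleton_subset_iff.mpr (Finset.mem_filter.mp hA).2
  exact Finset.singleton_subset_iff.mp this

lemma not_mem_Cx (x : F) : x ∉ Cx E x := by
  intro h
  rw [Cx, Finset.mem_sup] at h
  obtain ⟨A, hA, hxA⟩ := h
  exact (Finset.mem_filter.mp hA).2 hxA

lemma Ax_subset {x : F} {A : Finset F} (hA : SC E A) (hx : x ∈ A) : Ax E x ⊆ A := by
  have h : Ax E x ≤ id A :=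
    Finset.inf_le (Finset.mem_filter.mpr ⟨Finset.mem_filter.mpr ⟨Finset.mem_univ A, hA⟩, hx⟩)
  exact h

lemma subset_Cx {x : F} {A : Finset F} (hA : SC E A) (hx : x ∉ A) : A ⊆ Cx E x := by
  have h : id A ≤ Cx E x :=
    Finset.le_sup (f := id) (Finset.mem_filter.mpr ⟨Finset.mem_filter.mpr ⟨Finset.mem_univ A, hA⟩, hx⟩)
  exact h

lemma subAdj_resid (U' S' : Finset F) :
    subAdj E (Finset.univ \ adj E U') S' = adj E S' \ adj E U' := by
  ext v
  simp only [subAdj, Finset.mem_filter, Finset.mem_sdiff, Finset.mem_univ, true_and]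
  tauto

lemma card_resid (hU' : SC E U') (W : Finset F) :
    (adj E (W ∪ U')).card = (adj E W \ adj E U').card + U'.card := by
  rw [adj_union]
  have h : adj E W ∪ adj E U' = (adj E W \ adj E U') ∪ adj E U' := by
    rw [Finset.sdiff_union_self_eq_union]
  rw [h, Finset.card_union_of_disjoint Finset.sdiff_disjoint, hU']

lemma residSCSet_iff (hG : SCGraph E Finset.univ Finset.univ) {U' S' : Finset F}
    (hU' : SC E U') (hd : Disjoint S' U') :
    SCSet E (Finset.univ \ adj E U') S' ↔ SC E (S' ∪ U') := by
  have hc := card_resid hU' S'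
  have hcu := Finset.card_union_of_disjoint hd
  constructor
  · rintro ⟨h1, -⟩
    rw [subAdj_resid] at h1
    unfold SC
    omega
  · intro h
    unfold SC at h
    constructor
    · rw [subAdj_resid]
      omega
    · intro S'' hS''
      rw [subAdj_resid]
      have hd'' : Disjoint S'' U' := hd.mono_left hS''
      have h1 := card_resid hU' S''
      have h2 := hall hG (S'' ∪ U')
      have h3 := Finset.card_union_of_disjoint hd''
      omega

section COD

variable {n : ℕ} {S : Fin n → Finset F}

lemma mem_codPrev {i : Fin n} {x : F} : x ∈ codPrev S i ↔ ∃ j < i, x ∈ S j := by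
  simp [codPrev]

lemma cod_disj (hS : IsCOD E S) (i : Fin n) : Disjoint (S i) (codPrev S i) :=
  Finset.disjoint_left.mpr fun x hx =>
    (Finset.mem_sdiff.mp ((hS.2 i).1 hx)).2

lemma codPrev_eq_sup (i : Fin n) :
    codPrev S i = (Finset.univ.filter (fun j => j < i)).sup
      (fun j => codPrev S j ∪ S j) := by
  ext x
  rw [mem_codPrev, Finset.mem_sup]
  constructor
  · rintro ⟨j, hj, hx⟩
    exact ⟨j, by simp [hj], Finset.mem_union_right _ hx⟩
  · rintro ⟨j, hj, hx⟩
    simp only [Finset.mem_filter, Finset.mem_univ, true_and] at hj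
    rcases Finset.mem_union.mp hx with hx | hx
    · obtain ⟨k, hk, hxk⟩ := mem_codPrev.mp hx
      exact ⟨k, hk.trans hj, hxk⟩
    · exact ⟨j, hj, hx⟩

lemma cod_SC (hG : SCGraph E Finset.univ Finset.univ) (hS : IsCOD E S) :
    ∀ i : Fin n, SC E (codPrev S i) ∧ SC E (codPrev S i ∪ S i) := by
  have H : ∀ k : ℕ, ∀ i : Fin n, i.1 = k → SC E (codPrev S i) ∧ SC E (codPrev S i ∪ S i) := by
    intro k
    induction k using Nat.strong_induction_on with
    | _ k ih =>
      intro i hik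
      have h1 : SC E (codPrev S i) := by
        rw [codPrev_eq_sup]
        refine SC_sup hG _ _ fun j hj => ?_
        have hji : j < i := (Finset.mem_filter.mp hj).2
        exact (ih j.1 (by rw [← hik]; exact hji) j rfl).2
      have hmin := hS.2 i
      have hd : Disjoint (S i) (codPrev S i) := cod_disj hS i
      have h2 : SC E (S i ∪ codPrev S i) :=
        (residSCSet_iff hG h1 hd).mp hmin.2.2.1
      rw [Finset.union_comm] at h2
      exact ⟨h1, h2⟩
  exact fun i => H i.1 i rfl

lemma cod_cover (hG : SCGraph E Finset.univ Finset.univ) (hS : IsCOD E S) (i : Fin n)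
    {W : Finset F} (hW : SC E W) (h1 : codPrev S i ⊆ W) (h2 : W ⊆ codPrev S i ∪ S i) :
    W = codPrev S i ∨ W = codPrev S i ∪ S i := by
  have hU' : SC E (codPrev S i) := (cod_SC hG hS i).1
  have hmin := hS.2 i
  by_cases hWe : W \ codPrev S i = ∅
  · left
    exact Finset.Subset.antisymm (by rwa [Finset.sdiff_eq_empty_iff_subset] at hWe) h1
  · have hne : (W \ codPrev S i).Nonempty := Finset.nonempty_iff_ne_empty.mpr hWe
    have hsub : W \ codPrev S i ⊆ S i := by
      intro x hx
      obtain ⟨hxW, hxU'⟩ := Finset.mem_sdiff.mp hx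
      rcases Finset.mem_union.mp (h2 hxW) with h | h
      · exact absurd h hxU'
      · exact h
    have hWsc : SCSet E (Finset.univ \ adj E (codPrev S i)) (W \ codPrev S i) := by
      apply (residSCSet_iff hG hU' Finset.sdiff_disjoint).mpr
      have hWU : W \ codPrev S i ∪ codPrev S i = W := by
        rw [Finset.sdiff_union_self_eq_union, Finset.union_eq_left.mpr h1]
      rwa [hWU]
    by_cases heq : W \ codPrev S i = S i
    · right
      apply Finset.Subset.antisymm h2
      apply Finset.union_subset h1
      rw [← heq]
      exact Finset.sdiff_subset
    · exact absurd hWsc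
        (hmin.2.2.2 (W \ codPrev S i) (Finset.ssubset_iff_subset_ne.mpr ⟨hsub, heq⟩) hne)

lemma cod_block (hG : SCGraph E Finset.univ Finset.univ) (hS : IsCOD E S) (i : Fin n)
    (x : F) (hx : x ∈ S i) :
    S i = Dx E x ∧ adj E (S i) \ adj E (codPrev S i) = adj E (S i) \ adj E (Cx E x) := by
  obtain ⟨hU'sc, hUsc⟩ := cod_SC hG hS i
  have hd : Disjoint (S i) (codPrev S i) := cod_disj hS i
  have hxU : x ∈ codPrev S i ∪ S i := Finset.mem_union_right _ hx
  have hxU' : x ∉ codPrev S i := Finset.disjoint_left.mp hd hx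
  have hA := SC_Ax hG (E := E) x
  have hC := SC_Cx hG (E := E) x
  have hAmem := mem_Ax (E := E) x
  have hCmem := not_mem_Cx (E := E) x
  have hAU : Ax E x ⊆ codPrev S i ∪ S i := Ax_subset hUsc hxU
  have hU'C : codPrev S i ⊆ Cx E x := subset_Cx hU'sc hxU'
  have hW : SC E (codPrev S i ∪ Ax E x) := (SC_union_inter hG hU'sc hA).1
  have step1 : codPrev S i ∪ Ax E x = codPrev S i ∪ S i := by
    rcases cod_cover hG hS i hW Finset.subset_union_left
        (Finset.union_subset Finset.subset_union_left hAU) with h | h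
    · exact absurd (h ▸ Finset.mem_union_right _ hAmem) hxU'
    · exact h
  have hSA : S i ⊆ Ax E x := by
    intro y hy
    have hyU : y ∈ codPrev S i ∪ Ax E x := step1 ▸ Finset.mem_union_right _ hy
    rcases Finset.mem_union.mp hyU with h | h
    · exact absurd h (Finset.disjoint_left.mp hd hy)
    · exact h
  have hW2 : SC E ((codPrev S i ∪ S i) ∩ Cx E x) := (SC_union_inter hG hUsc hC).2
  have step2 : (codPrev S i ∪ S i) ∩ Cx E x = codPrev S i := by
    rcases cod_cover hG hS i hW2
        (Finset.subset_inter Finset.subset_union_left hU'C) Finset.inter_subset_left with h | h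
    · exact h
    · exact absurd (Finset.mem_inter.mp (h ▸ hxU)).2 hCmem
  have hSC : ∀ y ∈ S i, y ∉ Cx E x := by
    intro y hy hyC
    have hmem : y ∈ (codPrev S i ∪ S i) ∩ Cx E x :=
      Finset.mem_inter.mpr ⟨Finset.mem_union_right _ hy, hyC⟩
    rw [step2] at hmem
    exact Finset.disjoint_left.mp hd hy hmem
  have hblock : S i = Dx E x := by
    apply Finset.Subset.antisymm
    · intro y hy
      exact Finset.mem_sdiff.mpr ⟨hSA hy, hSC y hy⟩
    · intro y hy
      obtain ⟨hyA, hyC⟩ := Finset.mem_sdiff.mp hy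
      rcases Finset.mem_union.mp (hAU hyA) with h | h
      · exact absurd (hU'C h) hyC
      · exact h
  refine ⟨hblock, ?_⟩
  have hUC : SC E ((codPrev S i ∪ S i) ∪ Cx E x) := (SC_union_inter hG hUsc hC).1
  have hcard : (adj E (codPrev S i ∪ S i) ∩ adj E (Cx E x)).card = (adj E (codPrev S i)).card := by
    have e1 := Finset.card_union_add_card_inter (codPrev S i ∪ S i) (Cx E x)
    have e2 := Finset.card_union_add_card_inter (adj E (codPrev S i ∪ S i)) (adj E (Cx E x))
    have e3 : (adj E ((codPrev S i ∪ S i) ∪ Cx E x)).card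
        = (adj E (codPrev S i ∪ S i) ∪ adj E (Cx E x)).card := by rw [adj_union]
    rw [step2] at e1
    unfold SC at hUC hUsc hC hU'sc
    omega
  have hsub' : adj E (codPrev S i) ⊆ adj E (codPrev S i ∪ S i) ∩ adj E (Cx E x) :=
    Finset.subset_inter (adj_mono Finset.subset_union_left) (adj_mono hU'C)
  have heqadj : adj E (codPrev S i) = adj E (codPrev S i ∪ S i) ∩ adj E (Cx E x) :=
    Finset.eq_of_subset_of_card_le hsub' (le_of_eq hcard)
  ext v
  simp only [Finset.mem_sdiff]
  constructor
  · rintro ⟨hv1, hv2⟩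
    refine ⟨hv1, fun hvC => hv2 ?_⟩
    have : v ∈ adj E (codPrev S i ∪ S i) ∩ adj E (Cx E x) :=
      Finset.mem_inter.mpr ⟨adj_mono Finset.subset_union_right hv1, hvC⟩
    rw [← heqadj] at this
    exact this
  · rintro ⟨hv1, hv2⟩
    exact ⟨hv1, fun hvU' => hv2 (adj_mono hU'C hvU')⟩

lemma cod_range (hG : SCGraph E Finset.univ Finset.univ) (hS : IsCOD E S) :
    Set.range S = Set.range (Dx E) := by
  ext A
  constructor
  · rintro ⟨i, rfl⟩
    obtain ⟨x, hx⟩ := (hS.2 i).2.1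
    exact ⟨x, ((cod_block hG hS i x hx).1).symm⟩
  · rintro ⟨x, rfl⟩
    have hxuniv : x ∈ Finset.univ.biUnion S := hS.1 ▸ Finset.mem_univ x
    obtain ⟨i, -, hx⟩ := Finset.mem_biUnion.mp hxuniv
    exact ⟨i, (cod_block hG hS i x hx).1⟩

lemma cod_cluster_range (hG : SCGraph E Finset.univ Finset.univ) (hS : IsCOD E S) :
    Set.range (codCluster E S) = Set.range (Kx E) := by
  ext P
  constructor
  · rintro ⟨i, rfl⟩
    obtain ⟨x, hx⟩ := (hS.2 i).2.1
    obtain ⟨h1, h2⟩ := cod_block hG hS i x hx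
    refine ⟨x, ?_⟩
    rw [Kx, codCluster, ← h1]
    exact Prod.ext rfl h2.symm
  · rintro ⟨x, rfl⟩
    have hxuniv : x ∈ Finset.univ.biUnion S := hS.1 ▸ Finset.mem_univ x
    obtain ⟨i, -, hx⟩ := Finset.mem_biUnion.mp hxuniv
    obtain ⟨h1, h2⟩ := cod_block hG hS i x hx
    refine ⟨i, ?_⟩
    rw [Kx, codCluster, ← h1]
    exact Prod.ext rfl h2

lemma cod_injective (hS : IsCOD E S) : Function.Injective S := by
  have key : ∀ i j : Fin n, i < j → S i ≠ S j := by
    intro i j hij heq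
    obtain ⟨x, hx⟩ := (hS.2 j).2.1
    have hxprev : x ∈ codPrev S j := mem_codPrev.mpr ⟨i, hij, heq ▸ hx⟩
    exact Finset.disjoint_left.mp (cod_disj hS j) hx hxprev
  intro i j h
  rcases lt_trichotomy i j with h' | h' | h'
  · exact absurd h (key i j h')
  · exact h'
  · exact absurd h.symm (key j i h')

end COD

end CODUnique

/-- any two causal-ordering decompositions of a finite self-contained
bipartite graph have the same length, consist of the same unordered family of sets,
and have the same unordered family of clusters. -/
theorem causal_ordering_decomposition_unique (E : Finset (F × V))
    (hG : SCGraph E Finset.univ Finset.univ) {n m : ℕ}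
    (S : Fin n → Finset F) (T : Fin m → Finset F)
    (hS : IsCOD E S) (hT : IsCOD E T) :
    n = m ∧ Set.range S = Set.range T ∧
      Set.range (codCluster E S) = Set.range (codCluster E T) := by
  classical
  open CODUnique in
  have hr : Set.range S = Set.range T := by
    rw [cod_range hG hS, cod_range hG hT]
  have hc : Set.range (codCluster E S) = Set.range (codCluster E T) := by
    rw [cod_cluster_range hG hS, cod_cluster_range hG hT]
  refine ⟨?_, hr, hc⟩
  have hn : (Finset.univ.image S).card = n := by
    rw [Finset.card_image_of_injective _ (cod_injective hS), Finset.card_univ, Fintype.card_fin]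
  have hm : (Finset.univ.image T).card = m := by
    rw [Finset.card_image_of_injective _ (cod_injective hT), Finset.card_univ, Fintype.card_fin]
  have himg : Finset.univ.image S = Finset.univ.image T := by
    apply Finset.coe_injective
    simp only [Finset.coe_image, Finset.coe_univ, Set.image_univ, hr]
  rw [← hn, ← hm, himg]
end

section
/- Let M be a maximum matching of a finite bipartite graph G = (V, F, E), and let T_I and T_O be the incomplete and overcomplete sets of the coarse decomposition of G with respect to M. Then T_I and T_O are disjoint. -/
variable {F V : Type*} [Fintype F] [Fintype V] [DecidableEq F] [DecidableEq V]

/-- `M` is a matching of the bipartite graph with edge set `E`: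
`M ⊆ E` and no two edges of `M` share an endpoint. -/
def IsMatching (E M : Finset (F × V)) : Prop :=
  M ⊆ E ∧ (∀ e ∈ M, ∀ e' ∈ M, e.1 = e'.1 → e = e') ∧
    ∀ e ∈ M, ∀ e' ∈ M, e.2 = e'.2 → e = e'

/-- `M` is a maximum matching: a matching of greatest cardinality. -/
def IsMaxMatching (E M : Finset (F × V)) : Prop :=
  IsMatching E M ∧ ∀ M' : Finset (F × V), IsMatching E M' → M'.card ≤ M.card

/-- The (symmetric) adjacency relation of the bipartite graph on `F ⊕ V`. -/
def sumAdj (E : Finset (F × V)) : (F ⊕ V) → (F ⊕ V) → Prop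
  | Sum.inl f, Sum.inr v => (f, v) ∈ E
  | Sum.inr v, Sum.inl f => (f, v) ∈ E
  | _, _ => False

/-- The pair of consecutive path vertices forms an edge belonging to `M`. -/
def pairInM (M : Finset (F × V)) : (F ⊕ V) × (F ⊕ V) → Prop
  | (Sum.inl f, Sum.inr v) => (f, v) ∈ M
  | (Sum.inr v, Sum.inl f) => (f, v) ∈ M
  | _ => False

/-- `l` is an `M`-alternating path in the bipartite graph with edge set `E`:
a nonempty sequence of distinct vertices in which consecutive vertices are joined
by edges of `E` lying alternately inside and outside `M`. -/
def IsAltPath (E M : Finset (F × V)) (l : List (F ⊕ V)) : Prop :=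
  l ≠ [] ∧ l.Nodup ∧ l.Chain' (sumAdj E) ∧
    (l.zip l.tail).Chain' fun e e' => pairInM M e ↔ ¬ pairInM M e'

/-- `v ∈ V` is not an endpoint of any edge of `M`. -/
def VUnmatched (M : Finset (F × V)) (v : V) : Prop := ∀ f, (f, v) ∉ M

/-- `f ∈ F` is not an endpoint of any edge of `M`. -/
def FUnmatched (M : Finset (F × V)) (f : F) : Prop := ∀ v, (f, v) ∉ M

/-- The incomplete set `T_I`: all vertices reachable from some `M`-unmatched
vertex of `V` by a (possibly trivial) `M`-alternating path. -/
def incompleteSet (E M : Finset (F × V)) : Set (F ⊕ V) :=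
  {x | ∃ v : V, VUnmatched M v ∧ ∃ l : List (F ⊕ V),
    IsAltPath E M l ∧ l.head? = some (Sum.inr v) ∧ l.getLast? = some x}

/-- The overcomplete set `T_O`: all vertices reachable from some `M`-unmatched
vertex of `F` by a (possibly trivial) `M`-alternating path. -/
def overcompleteSet (E M : Finset (F × V)) : Set (F ⊕ V) :=
  {x | ∃ f : F, FUnmatched M f ∧ ∃ l : List (F ⊕ V),
    IsAltPath E M l ∧ l.head? = some (Sum.inl f) ∧ l.getLast? = some x}

/-- The complete set `T_C = (V ∪ F) \ (T_I ∪ T_O)`. -/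
def completeSet (E M : Finset (F × V)) : Set (F ⊕ V) :=
  Set.univ \ (incompleteSet E M ∪ overcompleteSet E M)

/-!
Suppose `x` lies in both sets. Walk from an unmatched `v ∈ V` to `x` along one alternating path
and back from `x` to an unmatched `f ∈ F` along the other, shortcutting at the first vertex of the
first path that lies on the second. Because both paths start at unmatched vertices, their `M`-edges
are exactly the steps entering `V` on the first path and entering `F` on the second, i.e. entering
`V` on the reversed second path; so the spliced walk is an `M`-augmenting path from `v` to `f`.
Exchanging its edges in and out of `M` yields a larger matching.
-/

theorem List.exists_nodup_isChain_of_mem_of_mem {X : Type*} {r : X → X → Prop}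
    {b z : X} {Q : List X} (hQ : Q.Nodup) (hQr : Q.IsChain (flip r)) (hQb : Q.head? = some b)
    (hzQ : z ∈ Q) :
    ∀ {P : List X} {a : X}, P.Nodup → P.IsChain r → P.head? = some a → z ∈ P →
      ∃ R : List X, R.Nodup ∧ R.IsChain r ∧ R.head? = some a ∧ R.getLast? = some b ∧
        R ⊆ P ++ Q
  | [], _, _, _, _, hzP => by simp at hzP
  | a :: P, a', hP, hPr, hPa, hzP => by
    obtain rfl : a = a' := by simpa using hPa
    by_cases haQ : a ∈ Q
    · obtain ⟨s, t, rfl⟩ := List.append_of_mem haQ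
      have hpre : s ++ [a] <+: s ++ a :: t := ⟨t, by simp⟩
      refine ⟨(s ++ [a]).reverse, List.nodup_reverse.mpr (hQ.sublist hpre.sublist),
        List.isChain_reverse.mpr (hQr.prefix hpre), by simp, ?_,
        fun y hy => List.mem_append_right _ (hpre.subset (List.mem_reverse.mp hy))⟩
      rw [List.getLast?_reverse, ← hQb]
      cases s <;> simp
    · have hzP : z ∈ P := (List.mem_cons.mp hzP).resolve_left fun h => haQ (h ▸ hzQ)
      obtain ⟨c, P, rfl⟩ := List.exists_cons_of_ne_nil (List.ne_nil_of_mem hzP)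
      obtain ⟨R, hR, hRr, hRc, hRb, hRsub⟩ :=
        List.exists_nodup_isChain_of_mem_of_mem hQ hQr hQb hzQ (List.nodup_cons.mp hP).2
          (List.isChain_cons_cons.mp hPr).2 rfl hzP
      obtain ⟨R, rfl⟩ := List.head?_eq_some_iff.mp hRc
      refine ⟨a :: c :: R, ?_, List.isChain_cons_cons.mpr ⟨(List.isChain_cons_cons.mp hPr).1, hRr⟩,
        rfl, by simpa using hRb, List.cons_subset_cons _ hRsub⟩
      refine List.nodup_cons.mpr ⟨fun ha => ?_, hR⟩
      rcases List.mem_append.mp (hRsub ha) with h | h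
      · exact (List.nodup_cons.mp hP).1 h
      · exact haQ h

section

omit [Fintype F] [Fintype V] [DecidableEq F] [DecidableEq V]

variable {E M N : Finset (F × V)}

lemma sumAdj_symm {a b : F ⊕ V} (h : sumAdj E a b) : sumAdj E b a := by
  cases a <;> cases b <;> simp_all [sumAdj]

lemma isRight_of_sumAdj {a b : F ⊕ V} (h : sumAdj E a b) : b.isRight = !a.isRight := by
  cases a <;> cases b <;> simp_all [sumAdj]

lemma pairInM_swap (p : (F ⊕ V) × (F ⊕ V)) : pairInM M p.swap ↔ pairInM M p := by
  obtain ⟨a | a, b | b⟩ := p <;> simp [pairInM]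

lemma VUnmatched.not_pairInM {v : V} (hv : VUnmatched M v) (y : F ⊕ V) :
    ¬ pairInM M (Sum.inr v, y) := by
  cases y <;> simp [pairInM, hv _]

lemma FUnmatched.not_pairInM {f : F} (hf : FUnmatched M f) (y : F ⊕ V) :
    ¬ pairInM M (Sum.inl f, y) := by
  cases y <;> simp [pairInM, hf _]

/-- The side `s` is `true` for `V`: along an alternating path from an unmatched vertex on side
`s`, the `M`-edges are exactly the steps into side `s`. -/
def IsAltStep (E M : Finset (F × V)) (s : Bool) (a b : F ⊕ V) : Prop :=
  sumAdj E a b ∧ (pairInM M (a, b) ↔ b.isRight = s)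

lemma IsAltStep.symm {s : Bool} {a b : F ⊕ V} (h : IsAltStep E M s a b) :
    IsAltStep E M (!s) b a := by
  refine ⟨sumAdj_symm h.1, ?_⟩
  rw [show (b, a) = (a, b).swap from rfl, pairInM_swap, h.2, isRight_of_sumAdj h.1]
  cases s <;> simp

lemma isChain_isAltStep_of_alternating {s : Bool} :
    ∀ (t : List (F ⊕ V)) (a b : F ⊕ V), (a :: b :: t).IsChain (sumAdj E) →
      ((a :: b :: t).zip (b :: t)).IsChain (fun e e' => pairInM M e ↔ ¬ pairInM M e') →
      (pairInM M (a, b) ↔ b.isRight = s) → (a :: b :: t).IsChain (IsAltStep E M s)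
  | [], a, b, hadj, _, hab => List.isChain_pair.mpr ⟨List.isChain_pair.mp hadj, hab⟩
  | c :: t, a, b, hadj, halt, hab => by
    rw [List.isChain_cons_cons] at hadj ⊢
    simp only [List.zip_cons_cons, List.isChain_cons_cons] at halt
    refine ⟨⟨hadj.1, hab⟩, isChain_isAltStep_of_alternating t b c hadj.2 halt.2 ?_⟩
    have hbc : pairInM M (b, c) ↔ ¬ pairInM M (a, b) := by tauto
    rw [hbc, hab, isRight_of_sumAdj (List.isChain_cons_cons.mp hadj.2).1]
    cases s <;> cases b.isRight <;> simp

lemma IsAltPath.isChain_isAltStep {l : List (F ⊕ V)} {x : F ⊕ V} (hl : IsAltPath E M l)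
    (hx : l.head? = some x) (hunm : ∀ y, ¬ pairInM M (x, y)) :
    l.IsChain (IsAltStep E M x.isRight) := by
  obtain ⟨t, rfl⟩ := List.head?_eq_some_iff.mp hx
  obtain ⟨-, -, hadj, halt⟩ := hl
  cases t with
  | nil => exact List.isChain_singleton x
  | cons b t =>
    refine isChain_isAltStep_of_alternating t x b hadj halt ?_
    rw [isRight_of_sumAdj (List.isChain_cons_cons.mp hadj).1]
    cases x.isRight <;> simp [hunm b]

lemma isAltStep_iff_of_ne {M' : Finset (F × V)} {f : F}
    (hMM' : ∀ g w, g ≠ f → ((g, w) ∈ M' ↔ (g, w) ∈ M)) {s : Bool} {a b : F ⊕ V}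
    (ha : a ≠ Sum.inl f) (hb : b ≠ Sum.inl f) : IsAltStep E M' s a b ↔ IsAltStep E M s a b := by
  obtain (g | w) := a <;> obtain (g' | w') := b <;> simp_all [IsAltStep, pairInM]

lemma VUnmatched.mono {v : V} (hv : VUnmatched M v) (hN : N ⊆ M) : VUnmatched N v :=
  fun f hf => hv f (hN hf)

lemma FUnmatched.mono {f : F} (hf : FUnmatched M f) (hN : N ⊆ M) : FUnmatched N f :=
  fun v hv => hf v (hN hv)

lemma FUnmatched.fst_ne {f : F} (hf : FUnmatched M f) {e : F × V} (he : e ∈ M) : e.1 ≠ f := by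
  obtain ⟨g, w⟩ := e
  rintro rfl
  exact hf w he

lemma VUnmatched.snd_ne {v : V} (hv : VUnmatched M v) {e : F × V} (he : e ∈ M) : e.2 ≠ v := by
  obtain ⟨g, w⟩ := e
  rintro rfl
  exact hv g he

lemma IsMatching.subset (hM : IsMatching E M) (hN : N ⊆ M) : IsMatching E N :=
  ⟨hN.trans hM.1, fun e he e' he' => hM.2.1 e (hN he) e' (hN he'),
    fun e he e' he' => hM.2.2 e (hN he) e' (hN he')⟩

end

section

omit [Fintype F] [Fintype V]

variable {E M : Finset (F × V)}

lemma VUnmatched.insert {v w : V} (hw : VUnmatched M w) (f : F) (hvw : v ≠ w) :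
    VUnmatched (insert (f, v) M) w := by
  intro g hg
  rcases Finset.mem_insert.mp hg with h | h
  · exact hvw (Prod.ext_iff.mp h).2.symm
  · exact hw g h

lemma FUnmatched.insert {f g : F} (hg : FUnmatched M g) (v : V) (hfg : f ≠ g) :
    FUnmatched (insert (f, v) M) g := by
  intro w hw
  rcases Finset.mem_insert.mp hw with h | h
  · exact hfg (Prod.ext_iff.mp h).1.symm
  · exact hg w h

lemma IsMatching.insert (hM : IsMatching E M) {f : F} {v : V} (he : (f, v) ∈ E)
    (hf : FUnmatched M f) (hv : VUnmatched M v) : IsMatching E (insert (f, v) M) := by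
  refine ⟨Finset.insert_subset he hM.1, ?_, ?_⟩
  · intro e he e' he' h
    rcases Finset.mem_insert.mp he with rfl | he <;> rcases Finset.mem_insert.mp he' with rfl | he'
    · rfl
    · exact absurd h.symm (hf.fst_ne he')
    · exact absurd h (hf.fst_ne he)
    · exact hM.2.1 e he e' he' h
  · intro e he e' he' h
    rcases Finset.mem_insert.mp he with rfl | he <;> rcases Finset.mem_insert.mp he' with rfl | he'
    · rfl
    · exact absurd h.symm (hv.snd_ne he')
    · exact absurd h (hv.snd_ne he)
    · exact hM.2.2 e he e' he' h

lemma IsMatching.fUnmatched_erase (hM : IsMatching E M) {f : F} {v : V} (h : (f, v) ∈ M) :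
    FUnmatched (M.erase (f, v)) f := fun _ hw =>
  Finset.ne_of_mem_erase hw (hM.2.1 _ (Finset.mem_of_mem_erase hw) _ h rfl)

lemma IsMatching.vUnmatched_erase (hM : IsMatching E M) {f : F} {v : V} (h : (f, v) ∈ M) :
    VUnmatched (M.erase (f, v)) v := fun _ hg =>
  Finset.ne_of_mem_erase hg (hM.2.2 _ (Finset.mem_of_mem_erase hg) _ h rfl)

theorem exists_isMatching_card_succ {f : F} :
    ∀ (l : List (F ⊕ V)) {M : Finset (F × V)} {v : V}, IsMatching E M → VUnmatched M v →
      FUnmatched M f → (Sum.inr v :: l).Nodup → (Sum.inr v :: l).IsChain (IsAltStep E M true) →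
      (Sum.inr v :: l).getLast? = some (Sum.inl f) →
      ∃ M' : Finset (F × V), IsMatching E M' ∧ M'.card = M.card + 1
  | [], _, _, _, _, _, _, _, hlast => by simp at hlast
  | Sum.inr _ :: _, _, _, _, _, _, _, hch, _ => by simp [IsAltStep, sumAdj] at hch
  | Sum.inl _ :: Sum.inl _ :: _, _, _, _, _, _, _, hch, _ => by simp [IsAltStep, sumAdj] at hch
  | [Sum.inl f1], M, v, hM, hv, hf, _, hch, hlast => by
    obtain rfl : f1 = f := by simpa using hlast
    exact ⟨insert (f1, v) M, hM.insert (List.isChain_pair.mp hch).1 hf hv,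
      Finset.card_insert_of_notMem (hv f1)⟩
  | Sum.inl f1 :: Sum.inr v1 :: l, M, v, hM, hv, hf, hnd, hch, hlast => by
    simp only [List.isChain_cons_cons] at hch
    obtain ⟨⟨hvf1, -⟩, ⟨-, hf1v1⟩, hch⟩ := hch
    replace hf1v1 : (f1, v1) ∈ M := by simpa [pairInM] using hf1v1
    have hf1 : Sum.inl f1 ∉ Sum.inr v1 :: l := (List.nodup_cons.mp (List.nodup_cons.mp hnd).2).1
    -- Trading `(f1, v1)` for `(f1, v)` keeps the size and leaves an augmenting path from `v1`.
    set M₀ := insert (f1, v) (M.erase (f1, v1))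
    have hM₀ : IsMatching E M₀ :=
      (hM.subset (Finset.erase_subset _ _)).insert hvf1 (hM.fUnmatched_erase hf1v1)
        (hv.mono (Finset.erase_subset _ _))
    have hcard : M₀.card = M.card := by
      rw [Finset.card_insert_of_notMem fun h => hv f1 (Finset.mem_of_mem_erase h),
        Finset.card_erase_add_one hf1v1]
    have hv1 : VUnmatched M₀ v1 :=
      (hM.vUnmatched_erase hf1v1).insert f1 fun h => hv f1 (h ▸ hf1v1)
    have hf' : FUnmatched M₀ f :=
      (hf.mono (Finset.erase_subset _ _)).insert v fun h => hf v1 (h ▸ hf1v1)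
    have hagree : ∀ g w, g ≠ f1 → ((g, w) ∈ M₀ ↔ (g, w) ∈ M) := by
      intro g w hg
      simp [M₀, hg]
    have hch₀ : (Sum.inr v1 :: l).IsChain (IsAltStep E M₀ true) :=
      hch.imp_of_mem_imp fun a b ha hb h =>
        (isAltStep_iff_of_ne hagree (ne_of_mem_of_not_mem ha hf1)
          (ne_of_mem_of_not_mem hb hf1)).mpr h
    obtain ⟨M', hM', hM'card⟩ := exists_isMatching_card_succ l hM₀ hv1 hf'
      (List.nodup_cons.mp (List.nodup_cons.mp hnd).2).2 hch₀ (by simpa using hlast)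
    exact ⟨M', hM', by rw [hM'card, hcard]⟩

end

/-- the incomplete and overcomplete sets of the coarse decomposition
with respect to a maximum matching are disjoint. -/
theorem incomplete_overcomplete_disjoint (E M : Finset (F × V))
    (hM : IsMaxMatching E M) :
    incompleteSet E M ∩ overcompleteSet E M = ∅ := by
  refine Set.eq_empty_of_forall_notMem ?_
  rintro x ⟨⟨v, hv, P, hP, hPv, hPx⟩, ⟨f, hf, Q, hQ, hQf, hQx⟩⟩
  have hPalt : P.IsChain (IsAltStep E M true) := hP.isChain_isAltStep hPv hv.not_pairInM
  have hQalt : Q.IsChain (flip (IsAltStep E M true)) :=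
    (hQ.isChain_isAltStep hQf hf.not_pairInM).imp fun _ _ h => h.symm
  obtain ⟨R, hRnd, hRalt, hRv, hRf, -⟩ :=
    List.exists_nodup_isChain_of_mem_of_mem hQ.2.1 hQalt hQf (List.mem_of_getLast? hQx)
      hP.2.1 hPalt hPv (List.mem_of_getLast? hPx)
  obtain ⟨l, rfl⟩ := List.head?_eq_some_iff.mp hRv
  obtain ⟨M', hM', hcard⟩ := exists_isMatching_card_succ l hM.1 hv hf hRnd hRalt hRf
  have := hM.2 M' hM'
  omega
end

section
/- Let M be a maximum matching of a finite bipartite graph G = (V, F, E) with coarse decomposition (T_I, T_C, T_O). Then M ∩ ((T_C ∩ F) × (T_C ∩ V)) is a perfect matching of the subgraph of G induced by T_C ∩ F and T_C ∩ V, and this induced subgraph is self-contained. -/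
variable {F V : Type*} [Fintype F] [Fintype V] [DecidableEq F] [DecidableEq V]

/-- The equation-side part of the complete set: `T_C ∩ F`. -/
def completeF (E M : Finset (F × V)) : Set F := {f | Sum.inl f ∈ completeSet E M}

/-- The variable-side part of the complete set: `T_C ∩ V`. -/
def completeV (E M : Finset (F × V)) : Set V := {v | Sum.inr v ∈ completeSet E M}

/-- Set-valued adjacency of `S ⊆ F` restricted to the vertex set `V'`. -/
def subAdjSet (E : Finset (F × V)) (V' : Set V) (S : Set F) : Set V :=
  {v | v ∈ V' ∧ ∃ f ∈ S, (f, v) ∈ E}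

/-- `S` is a self-contained set of the subgraph with variable part `V'`. -/
def SCSetOn (E : Finset (F × V)) (V' : Set V) (S : Set F) : Prop :=
  S.ncard = (subAdjSet E V' S).ncard ∧ ∀ S' ⊆ S, S'.ncard ≤ (subAdjSet E V' S').ncard

/-- The subgraph induced by `F'` and `V'` is self-contained. -/
def SCGraphOn (E : Finset (F × V)) (F' : Set F) (V' : Set V) : Prop :=
  F'.ncard = V'.ncard ∧ SCSetOn E V' F'

/-- `M'` is a matching of the (set of) edges `E'`. -/
def IsMatchingSet (E' M' : Set (F × V)) : Prop :=
  M' ⊆ E' ∧ (∀ e ∈ M', ∀ e' ∈ M', e.1 = e'.1 → e = e') ∧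
    ∀ e ∈ M', ∀ e' ∈ M', e.2 = e'.2 → e = e'

/-! Appending a matched edge to an alternating path that ends at one of its endpoints (or cutting
the path where it already meets the other endpoint) shows that the `M`-partner of a vertex of
`T_I` or `T_O` lies in the same set. Hence `M` pairs complete vertices with complete vertices, and
unmatched vertices lie in `T_I ∪ T_O` via the trivial path, so `M` restricts to a perfect matching
of the complete subgraph. A perfect matching injects every `S ⊆ T_C ∩ F` into its neighbourhood,
which is Hall's condition, and makes `|T_C ∩ F| = |T_C ∩ V|`. -/

namespace List

variable {α : Type*}

theorem IsPrefix.zip_tail : ∀ {l₁ l₂ : List α}, l₁ <+: l₂ → l₁.zip l₁.tail <+: l₂.zip l₂.tail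
  | [], _, _ => nil_prefix
  | [_], _, _ => nil_prefix
  | a :: b :: t, _, ⟨r, rfl⟩ => by
    simpa using IsPrefix.zip_tail (prefix_append (b :: t) r)

theorem getLast?_of_mem_getLast?_zip_tail :
    ∀ {l : List α} {p : α × α}, p ∈ (l.zip l.tail).getLast? → l.getLast? = some p.2
  | [], _, hp | [_], _, hp => by simp at hp
  | [_, _], _, hp => by simp at hp; simp [← hp]
  | a :: b :: c :: t, p, hp => by
    rw [getLast?_cons_cons]
    exact getLast?_of_mem_getLast?_zip_tail (by simpa using hp)

theorem zip_tail_append_singleton : ∀ {l : List α} {x : α}, l.getLast? = some x → ∀ y,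
    (l ++ [y]).zip (l ++ [y]).tail = l.zip l.tail ++ [(x, y)]
  | [_], _, hx, _ => by simp_all
  | a :: b :: t, x, hx, y => by
    rw [getLast?_cons_cons] at hx
    simpa using zip_tail_append_singleton hx y

end List

theorem Set.ncard_le_ncard_of_leftUnique {α β : Type*} [Finite β] {s : Set α} {t : Set β}
    {R : α → β → Prop} (h : ∀ a ∈ s, ∃ b ∈ t, R a b) (hR : Relator.LeftUnique R) :
    s.ncard ≤ t.ncard := by
  choose f hft hfR using h
  refine Nat.card_le_card_of_injective (fun a : s => ⟨f a a.2, hft a a.2⟩) fun a a' haa' => ?_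
  have hfa : f a a.2 = f a' a'.2 := congrArg Subtype.val haa'
  exact Subtype.ext (hR (hfR a a.2) (hfa ▸ hfR a' a'.2))

section AlternatingPaths

variable {F V : Type*} {E M : Finset (F × V)}

theorem sumAdj_of_pairInM (hME : M ⊆ E) {a b : F ⊕ V} (h : pairInM M (a, b)) :
    sumAdj E a b := by
  rcases a with _ | _ <;> rcases b with _ | _
  all_goals first | exact hME h | exact h.elim

theorem IsMatching.eq_of_pairInM (hM : IsMatching E M) {x y z : F ⊕ V}
    (hxy : pairInM M (x, y)) (hzx : pairInM M (z, x)) : z = y := by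
  rcases x with f | v <;> rcases y with _ | _ <;> rcases z with _ | _
  all_goals first | exact hxy.elim | exact hzx.elim | skip
  · exact congrArg Sum.inr (congrArg Prod.snd (hM.2.1 _ hzx _ hxy rfl))
  · exact congrArg Sum.inl (congrArg Prod.fst (hM.2.2 _ hzx _ hxy rfl))

theorem isAltPath_singleton (x : F ⊕ V) : IsAltPath E M [x] :=
  ⟨List.cons_ne_nil _ _, List.nodup_singleton x, List.isChain_singleton x, List.isChain_nil⟩

theorem IsAltPath.of_prefix {l₁ l₂ : List (F ⊕ V)} (h : IsAltPath E M l₂) (h₁₂ : l₁ <+: l₂)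
    (hne : l₁ ≠ []) : IsAltPath E M l₁ :=
  ⟨hne, h.2.1.sublist h₁₂.sublist, h.2.2.1.prefix h₁₂, h.2.2.2.prefix h₁₂.zip_tail⟩

theorem IsAltPath.append_singleton (hME : M ⊆ E) {l : List (F ⊕ V)} {x y : F ⊕ V}
    (hl : IsAltPath E M l) (hx : l.getLast? = some x) (hy : y ∉ l)
    (hxy : pairInM M (x, y)) (huniq : ∀ z, pairInM M (z, x) → z = y) :
    IsAltPath E M (l ++ [y]) := by
  obtain ⟨-, hnd, hadj, halt⟩ := hl
  refine ⟨by simp, hnd.append (List.nodup_singleton y) (by simpa using hy), ?_, ?_⟩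
  · refine hadj.append (List.isChain_singleton y) fun a ha b hb => ?_
    obtain ⟨rfl, rfl⟩ : a = x ∧ b = y := by simp_all
    exact sumAdj_of_pairInM hME hxy
  · rw [List.zip_tail_append_singleton hx]
    refine halt.append (List.isChain_singleton _) fun p hp q hq => ?_
    obtain rfl : q = (x, y) := by simpa using hq.symm
    -- the last edge `(z, x)` of `l` is unmatched, as otherwise `z = y ∈ l`
    have hpx : x = p.2 := by simpa [hx] using List.getLast?_of_mem_getLast?_zip_tail hp
    have hpl : p.1 ∈ l := (List.of_mem_zip (List.mem_of_getLast? hp)).1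
    simp only [hxy, not_true_eq_false, iff_false]
    intro hpM
    exact hy (huniq p.1 (hpx ▸ hpM) ▸ hpl)

def AltReachable (E M : Finset (F × V)) (s x : F ⊕ V) : Prop :=
  ∃ l : List (F ⊕ V), IsAltPath E M l ∧ l.head? = some s ∧ l.getLast? = some x

theorem AltReachable.refl (x : F ⊕ V) : AltReachable E M x x :=
  ⟨[x], isAltPath_singleton x, rfl, rfl⟩

theorem AltReachable.of_pairInM (hM : IsMatching E M) {s x y : F ⊕ V}
    (h : AltReachable E M s x) (hxy : pairInM M (x, y)) : AltReachable E M s y := by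
  obtain ⟨l, hl, hs, hx⟩ := h
  by_cases hy : y ∈ l
  · obtain ⟨l₁, l₂, rfl⟩ := List.append_of_mem hy
    refine ⟨l₁ ++ [y], hl.of_prefix ⟨l₂, by simp⟩ (by simp), ?_, List.getLast?_concat⟩
    simpa [List.head?_append] using hs
  · refine ⟨l ++ [y], ?_, by simp [hs], List.getLast?_concat⟩
    exact hl.append_singleton hM.1 hx hy hxy fun z hzx => hM.eq_of_pairInM hxy hzx

theorem mem_completeSet_of_pairInM (hM : IsMatching E M) {x y : F ⊕ V}
    (hxy : pairInM M (x, y)) (hy : y ∈ completeSet E M) : x ∈ completeSet E M :=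
  ⟨trivial, fun hx => hy.2 (hx.imp
    (fun ⟨v, hv, h⟩ => ⟨v, hv, AltReachable.of_pairInM hM h hxy⟩)
    (fun ⟨f, hf, h⟩ => ⟨f, hf, AltReachable.of_pairInM hM h hxy⟩))⟩

theorem IsMatching.exists_mem_completeV_of_mem_completeF (hM : IsMatching E M) {f : F}
    (hf : f ∈ completeF E M) : ∃ v ∈ completeV E M, (f, v) ∈ M := by
  obtain ⟨v, hfv⟩ : ∃ v, (f, v) ∈ M := by
    by_contra! h
    exact hf.2 (Or.inr ⟨f, h, AltReachable.refl _⟩)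
  exact ⟨v, mem_completeSet_of_pairInM hM (x := Sum.inr v) (y := Sum.inl f) hfv hf, hfv⟩

theorem IsMatching.exists_mem_completeF_of_mem_completeV (hM : IsMatching E M) {v : V}
    (hv : v ∈ completeV E M) : ∃ f ∈ completeF E M, (f, v) ∈ M := by
  obtain ⟨f, hfv⟩ : ∃ f, (f, v) ∈ M := by
    by_contra! h
    exact hv.2 (Or.inl ⟨v, h, AltReachable.refl _⟩)
  exact ⟨f, mem_completeSet_of_pairInM hM (x := Sum.inl f) (y := Sum.inr v) hfv hv, hfv⟩

end AlternatingPaths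

section SelfContained

variable {F V : Type*} {E : Finset (F × V)}

theorem IsMatching.isMatchingSet_restrict {M : Finset (F × V)} (hM : IsMatching E M)
    (P : F × V → Prop) : IsMatchingSet {e | e ∈ E ∧ P e} {e | e ∈ M ∧ P e} :=
  ⟨fun _ he => ⟨hM.1 he.1, he.2⟩, fun e he e' he' => hM.2.1 e he.1 e' he'.1,
    fun e he e' he' => hM.2.2 e he.1 e' he'.1⟩

theorem SCGraphOn.of_isMatchingSet [Finite F] [Finite V] {F' : Set F} {V' : Set V}
    {M' : Set (F × V)} (hM' : IsMatchingSet {e | e ∈ E ∧ e.1 ∈ F' ∧ e.2 ∈ V'} M')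
    (hF : ∀ f ∈ F', ∃ v, (f, v) ∈ M') (hV : ∀ v ∈ V', ∃ f, (f, v) ∈ M') :
    SCGraphOn E F' V' := by
  obtain ⟨hsub, hfst, hsnd⟩ := hM'
  have hHall : ∀ S ⊆ F', S.ncard ≤ (subAdjSet E V' S).ncard := fun S hS =>
    Set.ncard_le_ncard_of_leftUnique (R := fun f v => (f, v) ∈ M')
      (fun f hf => (hF f (hS hf)).imp fun v hv => ⟨⟨(hsub hv).2.2, f, hf, (hsub hv).1⟩, hv⟩)
      fun _ _ _ h h' => congrArg Prod.fst (hsnd _ h _ h' rfl)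
  have hN : subAdjSet E V' F' = V' := Set.Subset.antisymm (fun _ hv => hv.1) fun v hv =>
    let ⟨f, hfv⟩ := hV v hv
    ⟨hv, f, (hsub hfv).2.1, (hsub hfv).1⟩
  have hcard : F'.ncard = V'.ncard := le_antisymm (hN ▸ hHall F' subset_rfl)
    (Set.ncard_le_ncard_of_leftUnique (R := fun v f => (f, v) ∈ M')
      (fun v hv => (hV v hv).imp fun f hfv => ⟨(hsub hfv).2.1, hfv⟩)
      fun _ _ _ h h' => congrArg Prod.snd (hfst _ h _ h' rfl))
  exact ⟨hcard, hcard.trans (congrArg Set.ncard hN).symm, hHall⟩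

end SelfContained

/-- `M ∩ ((T_C ∩ F) × (T_C ∩ V))` is a perfect matching of the
subgraph of `G` induced by `T_C ∩ F` and `T_C ∩ V`, and this induced subgraph
is self-contained. -/
theorem complete_subgraph_perfectly_matched_and_selfContained
    (E M : Finset (F × V)) (hM : IsMaxMatching E M) :
    IsMatchingSet
      {e : F × V | e ∈ E ∧ e.1 ∈ completeF E M ∧ e.2 ∈ completeV E M}
      {e : F × V | e ∈ M ∧ e.1 ∈ completeF E M ∧ e.2 ∈ completeV E M} ∧
    (∀ f ∈ completeF E M, ∃ v ∈ completeV E M, (f, v) ∈ M) ∧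
    (∀ v ∈ completeV E M, ∃ f ∈ completeF E M, (f, v) ∈ M) ∧
    SCGraphOn E (completeF E M) (completeV E M) := by
  have hF (f) (hf : f ∈ completeF E M) := hM.1.exists_mem_completeV_of_mem_completeF hf
  have hV (v) (hv : v ∈ completeV E M) := hM.1.exists_mem_completeF_of_mem_completeV hv
  have hMC := hM.1.isMatchingSet_restrict fun e => e.1 ∈ completeF E M ∧ e.2 ∈ completeV E M
  refine ⟨hMC, hF, hV, SCGraphOn.of_isMatchingSet hMC (fun f hf => ?_) (fun v hv => ?_)⟩
  · obtain ⟨v, hv, hfv⟩ := hF f hf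
    exact ⟨v, hfv, hf, hv⟩
  · obtain ⟨f, hf, hfv⟩ := hV v hv
    exact ⟨f, hfv, hf, hv⟩
end

section
/- Let M be a perfect matching of a finite self-contained bipartite graph G = (V, F, E), and let S_V^(1), …, S_V^(n) be a topological ordering of the strongly connected components of the marginalized oriented graph of G with respect to M. For each i, let G^(i) be the subgraph of G induced by the union over j ≥ i of S_V^(j) ∪ M(S_V^(j)). Then for every i, G^(i) is self-contained and M(S_V^(i)) is a minimal self-contained set in G^(i). -/
variable {F V : Type*} [Fintype F] [Fintype V] [DecidableEq F] [DecidableEq V]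

/-- `M` is a perfect matching: a matching covering every vertex of `F` and of `V`. -/
def IsPerfectMatching (E M : Finset (F × V)) : Prop :=
  IsMatching E M ∧ (∀ f : F, ∃ v, (f, v) ∈ M) ∧ ∀ v : V, ∃ f, (f, v) ∈ M

/-- Edge relation of the marginalized oriented graph with respect to the perfect
matching `M`: `v → v'` (with `v ≠ v'`) iff some `f ∈ F` satisfies `(f, v') ∈ M`
and `(f, v) ∈ E \ M`. -/
def margEdge (E M : Finset (F × V)) (v v' : V) : Prop :=
  v ≠ v' ∧ ∃ f : F, (f, v') ∈ M ∧ (f, v) ∈ E ∧ (f, v) ∉ M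

/-- Reachability in the marginalized oriented graph. -/
def margReach (E M : Finset (F × V)) : V → V → Prop :=
  Relation.ReflTransGen (margEdge E M)

/-- `C` is a strongly connected component of the marginalized oriented graph. -/
def IsSCC (E M : Finset (F × V)) (C : Set V) : Prop :=
  ∃ v : V, C = {w | margReach E M v w ∧ margReach E M w v}

/-- A topological ordering `S 0, …, S (n-1)` of the strongly connected components
of the marginalized oriented graph. -/
def IsTopOrder (E M : Finset (F × V)) {n : ℕ} (S : Fin n → Set V) : Prop :=
  (∀ i, IsSCC E M (S i)) ∧ Function.Injective S ∧
    (∀ C : Set V, IsSCC E M C → ∃ i, S i = C) ∧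
    ∀ i j : Fin n, i ≠ j → (∃ v ∈ S i, ∃ w ∈ S j, margEdge E M v w) → i < j

/-- `M(X)`: the set of vertices of `F` matched by `M` to vertices of `X ⊆ V`. -/
def matchedF (M : Finset (F × V)) (X : Set V) : Set F :=
  {f | ∃ v ∈ X, (f, v) ∈ M}

/-- `S` is a minimal self-contained set of the subgraph induced by `F'` and `V'`. -/
def MinSCSetOn (E : Finset (F × V)) (F' : Set F) (V' : Set V) (S : Set F) : Prop :=
  S ⊆ F' ∧ S.Nonempty ∧ SCSetOn E V' S ∧ ∀ S' ⊂ S, S'.Nonempty → ¬ SCSetOn E V' S'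

set_option linter.unusedSectionVars false in
lemma cross_lemma (E M : Finset (F × V)) (X : Set V) (v0 w : V)
    (hwv0 : margReach E M w v0) (hwX : w ∈ X) :
    ∀ v, margReach E M v w → margReach E M v0 v → v ∉ X →
      ∃ u u', margReach E M v0 u ∧ margReach E M u v0 ∧ u ∉ X ∧ u' ∈ X ∧
        margEdge E M u u' := by
  intro v hvw
  induction hvw using Relation.ReflTransGen.head_induction_on with
  | refl => exact fun _ h => absurd hwX h
  | @head a c h' hcw ih =>
    intro hv0a haX
    by_cases hcX : c ∈ X
    · exact ⟨a, c, hv0a, (Relation.ReflTransGen.head h' hcw).trans hwv0, haX, hcX, h'⟩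
    · exact ih (hv0a.trans (Relation.ReflTransGen.single h')) hcX


/-- for a perfect matching `M` of a finite self-contained bipartite
graph and a topological ordering `S 0, …, S (n-1)` of the strongly connected
components of the marginalized oriented graph, each subgraph `G^(i)` of `G` induced
by `⋃_{j ≥ i} (S j ∪ M(S j))` is self-contained and `M(S i)` is a minimal
self-contained set in `G^(i)`. -/
theorem scc_matched_sets_minimal_selfContained (E M : Finset (F × V))
    (hG : SCGraphOn E Set.univ Set.univ) (hM : IsPerfectMatching E M)
    {n : ℕ} (S : Fin n → Set V) (hS : IsTopOrder E M S) (i : Fin n) :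
    SCGraphOn E (⋃ j ∈ Set.Ici i, matchedF M (S j)) (⋃ j ∈ Set.Ici i, S j) ∧
    MinSCSetOn E (⋃ j ∈ Set.Ici i, matchedF M (S j)) (⋃ j ∈ Set.Ici i, S j)
      (matchedF M (S i)) := by
  obtain ⟨⟨hME, hM1, hM2⟩, hMF, hMV⟩ := hM
  obtain ⟨hSCC, hSinj, hSsurj, htop⟩ := hS
  choose ν hν using hMF
  choose μ hμ using hMV
  -- basic matching facts
  have hMeq : ∀ {f v}, (f, v) ∈ M → f = μ v := by
    intro f v h
    have := hM2 _ h _ (hμ v) rfl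
    exact congrArg Prod.fst this
  have hνμ : ∀ v, ν (μ v) = v := by
    intro v
    have := hM1 _ (hν (μ v)) _ (hμ v) rfl
    exact (congrArg Prod.snd this)
  have hμν : ∀ f, μ (ν f) = f := fun f => (hMeq (hν f)).symm
  have hμinj : Function.Injective μ :=
    Function.LeftInverse.injective hνμ
  have hνinj : Function.Injective ν :=
    Function.LeftInverse.injective hμν
  have hmatched : ∀ X : Set V, matchedF M X = μ '' X := by
    intro X
    ext f
    constructor
    · rintro ⟨v, hvX, hfv⟩
      exact ⟨v, hvX, (hMeq hfv).symm⟩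
    · rintro ⟨v, hvX, rfl⟩
      exact ⟨v, hvX, hμ v⟩
  set VI : Set V := ⋃ j ∈ Set.Ici i, S j with hVIdef
  set FI : Set F := ⋃ j ∈ Set.Ici i, matchedF M (S j) with hFIdef
  have hFI : FI = μ '' VI := by
    simp only [hFIdef, hVIdef, hmatched, Set.image_iUnion]
  have hmemVI : ∀ {v}, v ∈ VI ↔ ∃ j, i ≤ j ∧ v ∈ S j := by
    intro v; simp [hVIdef, Set.mem_iUnion]
  -- ν maps FI into VI
  have hνFI : ∀ f ∈ FI, ν f ∈ VI := by
    intro f hf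
    rw [hFI] at hf
    obtain ⟨v, hv, rfl⟩ := hf
    rw [hνμ]; exact hv
  -- Hall-type inequality for subsets of FI
  have hall : ∀ S' : Set F, S' ⊆ FI → S'.ncard ≤ (subAdjSet E VI S').ncard := by
    intro S' hsub
    have h1 : ν '' S' ⊆ subAdjSet E VI S' := by
      rintro v ⟨f, hf, rfl⟩
      exact ⟨hνFI f (hsub hf), f, hf, hME (hν f)⟩
    calc S'.ncard = (ν '' S').ncard := (Set.ncard_image_of_injective _ hνinj).symm
      _ ≤ _ := Set.ncard_le_ncard h1 (Set.toFinite _)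
  -- adjacency of S' ⊆ matchedF M (S i) is contained in S i
  have hadj_sub : ∀ S' : Set F, S' ⊆ matchedF M (S i) → subAdjSet E VI S' ⊆ S i := by
    intro S' hsub v hv
    obtain ⟨hvVI, f, hfS', hfE⟩ := hv
    obtain ⟨w, hwSi, hfwM⟩ := hsub hfS'
    by_cases hvw : v = w
    · exact hvw ▸ hwSi
    · have hedge : margEdge E M v w := by
        refine ⟨hvw, f, hfwM, hfE, fun hc => hvw ?_⟩
        have h1 := hMeq hc
        have h2 := hMeq hfwM
        have : ν f = v := h1 ▸ hνμ v
        have : ν f = w := h2 ▸ hνμ w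
        rw [← ‹ν f = v›, ‹ν f = w›]
      obtain ⟨j, hij, hvSj⟩ := hmemVI.mp hvVI
      by_cases hji : j = i
      · exact hji ▸ hvSj
      · exact absurd (htop j i hji ⟨v, hvSj, w, hwSi, hedge⟩) (not_lt.mpr hij)
  have hSiVI : S i ⊆ VI := by
    intro v hv; exact hmemVI.mpr ⟨i, le_refl i, hv⟩
  obtain ⟨v0, hSi⟩ := hSCC i
  have hTFI : matchedF M (S i) ⊆ FI := fun f hf => Set.mem_biUnion Set.self_mem_Ici hf
  have hv0 : v0 ∈ S i := by rw [hSi]; exact ⟨.refl, .refl⟩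
  refine ⟨⟨?_, ?_, fun S' hs => hall S' hs⟩, hTFI, ⟨μ v0, v0, hv0, hμ v0⟩, ⟨?_, fun S' hs => hall S' (hs.trans hTFI)⟩, ?_⟩
  · rw [hFI]; exact Set.ncard_image_of_injective _ hμinj
  · -- FI.ncard = (subAdjSet E VI FI).ncard
    have h1 : subAdjSet E VI FI = VI := by
      apply Set.Subset.antisymm (fun v hv => hv.1)
      intro v hv
      refine ⟨hv, μ v, hFI ▸ ⟨v, hv, rfl⟩, hME (hμ v)⟩
    rw [h1, hFI, Set.ncard_image_of_injective _ hμinj]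
  · -- ncard equality for matchedF M (S i)
    have h1 : subAdjSet E VI (matchedF M (S i)) = S i := by
      apply Set.Subset.antisymm (hadj_sub _ (le_refl _))
      intro v hv
      exact ⟨hSiVI hv, μ v, (hmatched (S i)) ▸ ⟨v, hv, rfl⟩, hME (hμ v)⟩
    rw [h1, hmatched, Set.ncard_image_of_injective _ hμinj]
  · -- minimality
    rintro S' hss ⟨f0, hf0⟩ ⟨hcard, -⟩
    set X : Set V := ν '' S' with hXdef
    have hXsub : X ⊆ S i := by
      rintro v ⟨f, hf, rfl⟩
      obtain ⟨w, hwSi, hfwM⟩ := hss.subset hf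
      rw [hMeq hfwM, hνμ]; exact hwSi
    have hμX : μ '' X = S' := by
      rw [hXdef, ← Set.image_comp]
      simpa [Function.comp, hμν] using Set.image_id S'
    have hXproper : X ≠ S i := by
      intro hc
      apply hss.ne
      rw [← hμX, hc, ← hmatched]
    -- adjacency of S' equals X
    have hXadj : X ⊆ subAdjSet E VI S' := by
      rintro v ⟨f, hf, rfl⟩
      exact ⟨hνFI f (hss.subset.trans hTFI hf), f, hf, hME (hν f)⟩
    have hcardX : X.ncard = S'.ncard := Set.ncard_image_of_injective _ hνinj
    have hadjX : subAdjSet E VI S' = X := by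
      refine (Set.eq_of_subset_of_ncard_le hXadj ?_ (Set.toFinite _)).symm
      rw [hcardX, ← hcard]
    -- find crossing edge
    obtain ⟨w, hwSi, hwX⟩ : ∃ w ∈ S i, w ∉ X := by
      by_contra hc
      push_neg at hc
      exact hXproper (Set.Subset.antisymm hXsub hc)
    have hx0 : ν f0 ∈ X := ⟨f0, hf0, rfl⟩
    have hx0Si : ν f0 ∈ S i := hXsub hx0
    rw [hSi] at hwSi hx0Si
    obtain ⟨u, u', hv0u, huv0, huX, hu'X, hedge⟩ :=
      cross_lemma E M X v0 (ν f0) hx0Si.2 hx0 w (hwSi.2.trans hx0Si.1) hwSi.1 hwX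
    have huSi : u ∈ S i := by rw [hSi]; exact ⟨hv0u, huv0⟩
    -- u ∈ subAdjSet E VI S'
    obtain ⟨hne, g, hgM, hgE, -⟩ := hedge
    have hgS' : g ∈ S' := by
      have : μ u' ∈ μ '' X := ⟨u', hu'X, rfl⟩
      rw [hμX] at this
      rwa [hMeq hgM]
    have : u ∈ subAdjSet E VI S' := ⟨hSiVI huSi, g, hgS', hgE⟩
    rw [hadjX] at this
    exact huX this
end
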